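/- arXiv:2405.18094 — 2 statements merged into one kernel-verified Lean document; each statement's English description precedes it below -/
import Mathlib

section
/- Let H₀ be a self-adjoint operator, A a closed operator with D(H₀) ⊂ D(A), and ε > 0 such that c := sup_{λ ∈ ℝ} ‖A (H₀ - λ - iε)^{-1}‖ < 1. Set H = H₀ + A (self-adjoint on D(H₀)). Then for all λ ∈ ℝ, ‖A (H - λ - iε)^{-1}‖ ≤ c / (1 - c). -/
open MeasureTheory
open scoped ComplexInnerProductSpace

/-- If `sup_λ ‖A (H₀ - λ - iε)⁻¹‖ ≤ c < 1` and `H = H₀ + A`, then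
`‖A (H - λ - iε)⁻¹‖ ≤ c / (1 - c)` for every real `λ`. The resolvents are encoded as two-sided
inverse families. -/
theorem stmt2 {𝓗 : Type*} [NormedAddCommGroup 𝓗] [InnerProductSpace ℂ 𝓗] [CompleteSpace 𝓗]
    (H₀ A : 𝓗 →ₗ[ℂ] 𝓗) (DH DA : Submodule ℂ 𝓗) (hDom : DH ≤ DA)
    (hAclosed : IsClosed {p : 𝓗 × 𝓗 | A p.1 = p.2})
    (ε c : ℝ) (hε : 0 < ε) (hc0 : 0 ≤ c) (hc1 : c < 1)
    (R₀ RH : ℝ → (𝓗 →L[ℂ] 𝓗))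
    (hR₀dom : ∀ (lam : ℝ) (x : 𝓗), R₀ lam x ∈ DH)
    (hR₀left : ∀ (lam : ℝ), ∀ ψ ∈ DH, R₀ lam (H₀ ψ - ((lam : ℂ) + ε * Complex.I) • ψ) = ψ)
    (hR₀right : ∀ (lam : ℝ) (x : 𝓗),
      H₀ (R₀ lam x) - ((lam : ℂ) + ε * Complex.I) • R₀ lam x = x)
    (hc : ∀ (lam : ℝ) (x : 𝓗), ‖A (R₀ lam x)‖ ≤ c * ‖x‖)
    (hRHdom : ∀ (lam : ℝ) (x : 𝓗), RH lam x ∈ DH)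
    (hRHleft : ∀ (lam : ℝ), ∀ ψ ∈ DH,
      RH lam (H₀ ψ + A ψ - ((lam : ℂ) + ε * Complex.I) • ψ) = ψ)
    (hRHright : ∀ (lam : ℝ) (x : 𝓗),
      H₀ (RH lam x) + A (RH lam x) - ((lam : ℂ) + ε * Complex.I) • RH lam x = x) :
    ∀ (lam : ℝ) (x : 𝓗), ‖A (RH lam x)‖ ≤ (c / (1 - c)) * ‖x‖ := by
  intro lam x
  set y := RH lam x with hy
  have hyD : y ∈ DH := hRHdom lam x
  have h1 : H₀ y - ((lam : ℂ) + ε * Complex.I) • y = x - A y := by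
    have h := hRHright lam x
    rw [← hy] at h
    rw [← h]; abel
  have h2 : y = R₀ lam (x - A y) := by
    rw [← h1]; exact (hR₀left lam y hyD).symm
  have h3 : ‖A y‖ ≤ c * ‖x - A y‖ := by
    conv_lhs => rw [h2]
    exact hc lam _
  have h4 : ‖x - A y‖ ≤ ‖x‖ + ‖A y‖ := norm_sub_le _ _
  have h5 : (1 - c) * ‖A y‖ ≤ c * ‖x‖ := by nlinarith
  rw [div_mul_eq_mul_div, le_div_iff₀ (by linarith)]
  linarith
end

section
/- Let A be a closed densely defined operator on a Hilbert space 𝓗 and C a bounded operator on 𝓗. Then the following are equivalent: (a) range(C) ⊂ D(A) and AC is bounded; (b) sup over unit vectors φ ∈ D(A*) of |C* A* φ| is finite. Moreover, when these hold, ‖AC‖ equals that supremum. -/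
/-!
If `‖T C x‖ ≤ M ‖x‖`, then `⟪C* T* φ, x⟫ = ⟪φ, T C x⟫` bounds `C* T* φ` by duality. Conversely, a
bound on `C* T*` makes `v ↦ ⟪C x, T* v⟫` a bounded functional on `D(T*)`; Hahn–Banach and Riesz
represent it as `⟪y, v⟫` with `‖y‖ ≤ M ‖x‖`. This identity says that `(C x, y)` is orthogonal to
the orthogonal complement of the graph of `T`, so it lies in the graph because `T` is closed: `C x`
is in the domain and `T C x = y`.
-/

open scoped InnerProductSpace

section

variable {𝕜 E F G : Type*} [RCLike 𝕜]
  [NormedAddCommGroup E] [InnerProductSpace 𝕜 E]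
  [NormedAddCommGroup F] [InnerProductSpace 𝕜 F]
  [NormedAddCommGroup G] [InnerProductSpace 𝕜 G]

theorem Submodule.exists_inner_eq_of_norm_le [CompleteSpace E] (p : Submodule 𝕜 E)
    (f : p →ₗ[𝕜] 𝕜) {K : ℝ} (hK : 0 ≤ K) (hf : ∀ v, ‖f v‖ ≤ K * ‖v‖) :
    ∃ y : E, ‖y‖ ≤ K ∧ ∀ v : p, ⟪y, (v : E)⟫_𝕜 = f v := by
  obtain ⟨g, hgf, hg⟩ := exists_extension_norm_eq p (f.mkContinuous K hf)
  refine ⟨(InnerProductSpace.toDual 𝕜 E).symm g, ?_, fun v => ?_⟩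
  · rw [LinearIsometryEquiv.norm_map, hg]
    exact f.mkContinuous_norm_le hK hf
  · rw [InnerProductSpace.toDual_symm_apply, hgf]
    rfl

namespace LinearPMap

variable [CompleteSpace E] {T : E →ₗ.[𝕜] F}

theorem mem_graph_adjoint_of_mem_orthogonal (hT : Dense (T.domain : Set E))
    {w : WithLp 2 (E × F)}
    (hw : w ∈ (T.graph.comap (WithLp.linearEquiv 2 𝕜 (E × F)).toLinearMap)ᗮ) :
    (w.snd, -w.fst) ∈ T†.graph := by
  rw [adjoint_graph_eq_graph_adjoint hT, Submodule.mem_adjoint_iff]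
  intro a b hab
  have := Submodule.inner_right_of_mem_orthogonal (u := WithLp.toLp 2 (a, b)) hab hw
  rw [WithLp.prod_inner_apply] at this
  simp only [inner_neg_right, sub_neg_eq_add]
  exact (add_comm _ _).trans this

-- The inclusion `T†† ≤ T` for closed `T`, via `Γᗮᗮ = Γ` for the closed graph `Γ`.
theorem mem_graph_of_inner_adjoint [CompleteSpace F] (hT : Dense (T.domain : Set E))
    (hcl : T.IsClosed) {x : E} {y : F} (h : ∀ v : T†.domain, ⟪y, (v : F)⟫_𝕜 = ⟪x, T† v⟫_𝕜) :
    (x, y) ∈ T.graph := by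
  set Γ := T.graph.comap (WithLp.linearEquiv 2 𝕜 (E × F)).toLinearMap
  have : CompleteSpace Γ := (hcl.preimage (WithLp.prod_continuous_ofLp 2 E F)).completeSpace_coe
  suffices WithLp.toLp 2 (x, y) ∈ Γᗮᗮ by rwa [Submodule.orthogonal_orthogonal] at this
  refine (Submodule.mem_orthogonal' _ _).mpr fun w hw => ?_
  obtain ⟨v, hv, hTv⟩ := (mem_graph_iff _).mp (mem_graph_adjoint_of_mem_orthogonal hT hw)
  have hyw := h v
  rw [hv, hTv, inner_neg_right] at hyw
  rw [WithLp.prod_inner_apply]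
  exact (congrArg _ hyw).trans (add_neg_cancel _)

variable {C : G →L[𝕜] E} {M : ℝ}

theorem norm_adjoint_adjoint_apply_le [CompleteSpace G] (hT : Dense (T.domain : Set E))
    (hM : 0 ≤ M) (hb : ∀ x : G, ∃ hx : C x ∈ T.domain, ‖T ⟨C x, hx⟩‖ ≤ M * ‖x‖)
    (φ : F) (hφ : φ ∈ T†.domain) :
    ‖ContinuousLinearMap.adjoint C (T† ⟨φ, hφ⟩)‖ ≤ M * ‖φ‖ := by
  rw [← innerSL_apply_norm 𝕜]
  refine (innerSL 𝕜 _).opNorm_le_bound (by positivity) fun x => ?_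
  obtain ⟨hx, hbx⟩ := hb x
  calc ‖⟪ContinuousLinearMap.adjoint C (T† ⟨φ, hφ⟩), x⟫_𝕜‖ = ‖⟪φ, T ⟨C x, hx⟩⟫_𝕜‖ := by
        rw [ContinuousLinearMap.adjoint_inner_left, adjoint_isFormalAdjoint hT ⟨φ, hφ⟩ ⟨C x, hx⟩]
    _ ≤ ‖φ‖ * ‖T ⟨C x, hx⟩‖ := norm_inner_le_norm _ _
    _ ≤ ‖φ‖ * (M * ‖x‖) := by gcongr
    _ = M * ‖φ‖ * ‖x‖ := by ring

theorem exists_mem_domain_norm_apply_le [CompleteSpace F] [CompleteSpace G]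
    (hT : Dense (T.domain : Set E)) (hcl : T.IsClosed) (hM : 0 ≤ M)
    (hb : ∀ φ : F, ∀ hφ : φ ∈ T†.domain, ‖ContinuousLinearMap.adjoint C (T† ⟨φ, hφ⟩)‖ ≤ M * ‖φ‖)
    (x : G) :
    ∃ hx : C x ∈ T.domain, ‖T ⟨C x, hx⟩‖ ≤ M * ‖x‖ := by
  obtain ⟨y, hy, hyT⟩ := T†.domain.exists_inner_eq_of_norm_le
    ((innerSL 𝕜 (C x)).toLinearMap.comp T†.toFun) (K := M * ‖x‖) (by positivity) fun v => by
      calc ‖⟪C x, T† v⟫_𝕜‖ = ‖⟪x, ContinuousLinearMap.adjoint C (T† v)⟫_𝕜‖ := by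
            rw [ContinuousLinearMap.adjoint_inner_right]
        _ ≤ ‖x‖ * (M * ‖v‖) := (norm_inner_le_norm _ _).trans (by gcongr; exact hb v v.2)
        _ = M * ‖x‖ * ‖v‖ := by ring
  have hgraph := mem_graph_of_inner_adjoint hT hcl hyT
  have hx := mem_domain_of_mem_graph hgraph
  refine ⟨hx, ?_⟩
  rwa [← (image_iff hx).mpr hgraph]

theorem comp_bounded_iff_adjoint_comp_bounded [CompleteSpace F] [CompleteSpace G]
    (hT : Dense (T.domain : Set E)) (hcl : T.IsClosed) (hM : 0 ≤ M) :
    (∀ x : G, ∃ hx : C x ∈ T.domain, ‖T ⟨C x, hx⟩‖ ≤ M * ‖x‖) ↔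
      ∀ φ : F, ∀ hφ : φ ∈ T†.domain, ‖ContinuousLinearMap.adjoint C (T† ⟨φ, hφ⟩)‖ ≤ M * ‖φ‖ :=
  ⟨norm_adjoint_adjoint_apply_le hT hM, exists_mem_domain_norm_apply_le hT hcl hM⟩

end LinearPMap

end

/-- For a closed densely defined operator `A` and a bounded operator `C`:
(range C ⊆ D(A) and AC bounded) iff (φ ↦ C* A* φ is bounded on D(A*)); moreover the best bounds
coincide (encoded by the per-bound equivalence). -/
theorem stmt4 {𝓗 : Type*} [NormedAddCommGroup 𝓗] [InnerProductSpace ℂ 𝓗] [CompleteSpace 𝓗]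
    (A : 𝓗 →ₗ.[ℂ] 𝓗) (hdense : Dense (A.domain : Set 𝓗))
    (hclosed : IsClosed (A.graph : Set (𝓗 × 𝓗)))
    (C : 𝓗 →L[ℂ] 𝓗) :
    ((∃ M : ℝ, 0 ≤ M ∧ ∀ x : 𝓗, ∃ hx : C x ∈ A.domain, ‖A ⟨C x, hx⟩‖ ≤ M * ‖x‖) ↔
      (∃ M : ℝ, 0 ≤ M ∧ ∀ φ : 𝓗, ∀ hφ : φ ∈ A.adjoint.domain,
        ‖ContinuousLinearMap.adjoint C (A.adjoint ⟨φ, hφ⟩)‖ ≤ M * ‖φ‖)) ∧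
    (∀ M : ℝ, 0 ≤ M →
      ((∀ x : 𝓗, ∃ hx : C x ∈ A.domain, ‖A ⟨C x, hx⟩‖ ≤ M * ‖x‖) ↔
        (∀ φ : 𝓗, ∀ hφ : φ ∈ A.adjoint.domain,
          ‖ContinuousLinearMap.adjoint C (A.adjoint ⟨φ, hφ⟩)‖ ≤ M * ‖φ‖))) := by
  have bound_iff := fun M (hM : 0 ≤ M) =>
    LinearPMap.comp_bounded_iff_adjoint_comp_bounded (C := C) hdense hclosed hM
  exact ⟨⟨fun ⟨M, hM, h⟩ => ⟨M, hM, (bound_iff M hM).mp h⟩,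
    fun ⟨M, hM, h⟩ => ⟨M, hM, (bound_iff M hM).mpr h⟩⟩, bound_iff⟩
end
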